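/- arXiv:1811.08776 — 6 statements merged into one kernel-verified Lean document; each statement's English description precedes it below -/
import Mathlib

section
/- Let R be a real symmetric n×n matrix having 1 as an eigenvalue and having 0 as an eigenvalue with multiplicity at least m. Then Σ|λ_i| ≤ √((n−1−m)(tr(R²)−1)) + 1. -/
/-!
Besides one eigenvalue equal to `1` and the zero eigenvalues, at most `n - 1 - m` eigenvalues
remain; since `tr (R²) = ∑ λᵢ²`, their squares sum to `tr (R²) - 1`, and Cauchy–Schwarz bounds
the sum of their absolute values by `√((n - 1 - m) (tr (R²) - 1))`.
-/

open scoped Classical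

open Finset

theorem Matrix.IsHermitian.trace_mul_self_eq_sum_sq_eigenvalues {𝕜 ι : Type*} [RCLike 𝕜]
    [Fintype ι] [DecidableEq ι] {A : Matrix ι ι 𝕜} (hA : A.IsHermitian) :
    (A * A).trace = ∑ i, ((hA.eigenvalues i ^ 2 : ℝ) : 𝕜) := by
  conv_lhs => rw [hA.spectral_theorem, ← map_mul, Unitary.conjStarAlgAut_apply,
    Matrix.trace_mul_cycle, Unitary.coe_star_mul_self, one_mul, Matrix.diagonal_mul_diagonal,
    Matrix.trace_diagonal]
  simp [sq]

theorem Finset.sum_abs_le_sqrt_card_mul_sum_sq {ι : Type*} (s : Finset ι) (f : ι → ℝ) :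
    ∑ i ∈ s, |f i| ≤ √(#s * ∑ i ∈ s, f i ^ 2) := by
  apply Real.le_sqrt_of_sq_le
  simpa only [sq_abs] using sq_sum_le_card_mul_sum_sq (s := s) (f := fun i => |f i|)

section

variable {ι : Type*} [Fintype ι] {μ : ι → ℝ} {i₀ : ι}

theorem sum_comp_eq_add_sum_erase_support (hi₀ : μ i₀ = 1) {g : ℝ → ℝ} (hg : g 0 = 0) :
    ∑ i, g (μ i) = g 1 + ∑ i ∈ ({i | μ i ≠ 0} : Finset ι).erase i₀, g (μ i) := by
  have hmem : i₀ ∈ ({i | μ i ≠ 0} : Finset ι) := by simp [hi₀]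
  rw [← hi₀, add_sum_erase _ (fun i => g (μ i)) hmem, sum_filter_of_ne]
  intro i _ hi h
  exact hi (h ▸ hg)

theorem card_erase_support_add_card_zeros (hi₀ : μ i₀ = 1) :
    #(({i | μ i ≠ 0} : Finset ι).erase i₀) + #{i | μ i = 0} + 1 = Fintype.card ι := by
  have hmem : i₀ ∈ ({i | μ i ≠ 0} : Finset ι) := by simp [hi₀]
  have hpos : 0 < #({i | μ i ≠ 0} : Finset ι) := card_pos.mpr ⟨i₀, hmem⟩
  have hsplit := card_filter_add_card_filter_not (s := univ) (fun i => μ i ≠ 0)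
  simp only [not_not, card_univ] at hsplit
  rw [card_erase_of_mem hmem]
  omega

theorem sum_abs_le_of_apply_eq_one_of_le_card_zeros (hi₀ : μ i₀ = 1) {m : ℕ}
    (h0 : m ≤ #{i | μ i = 0}) :
    ∑ i, |μ i| ≤ √((Fintype.card ι - 1 - m) * (∑ i, μ i ^ 2 - 1)) + 1 := by
  set S := ({i | μ i ≠ 0} : Finset ι).erase i₀
  have habs : ∑ i, |μ i| = 1 + ∑ i ∈ S, |μ i| := by
    simpa using sum_comp_eq_add_sum_erase_support hi₀ (g := abs) abs_zero
  have hsq : ∑ i, μ i ^ 2 = 1 + ∑ i ∈ S, μ i ^ 2 := by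
    simpa using sum_comp_eq_add_sum_erase_support hi₀ (g := (· ^ 2)) (zero_pow two_ne_zero)
  have hcard : (#S : ℝ) ≤ Fintype.card ι - 1 - m := by
    have hsplit : (#S : ℝ) + #{i | μ i = 0} + 1 = Fintype.card ι := by
      exact_mod_cast card_erase_support_add_card_zeros hi₀
    have hm : (m : ℝ) ≤ #{i | μ i = 0} := by exact_mod_cast h0
    linarith
  calc ∑ i, |μ i| = ∑ i ∈ S, |μ i| + 1 := by rw [habs, add_comm]
    _ ≤ √(#S * ∑ i ∈ S, μ i ^ 2) + 1 := by gcongr; exact S.sum_abs_le_sqrt_card_mul_sum_sq μ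
    _ ≤ √((Fintype.card ι - 1 - m) * (∑ i, μ i ^ 2 - 1)) + 1 := by
      rw [hsq, add_sub_cancel_left]
      gcongr

end

theorem energy_bound_one_eigenvalue_and_nullity {n : ℕ}
    (R : Matrix (Fin n) (Fin n) ℝ) (hR : R.IsHermitian) (m : ℕ)
    (h1 : ∃ i, hR.eigenvalues i = 1)
    (h0 : m ≤ (Finset.univ.filter fun i => hR.eigenvalues i = 0).card) :
    ∑ i, |hR.eigenvalues i| ≤
      Real.sqrt (((n : ℝ) - 1 - m) * ((R * R).trace - 1)) + 1 := by
  obtain ⟨i₀, hi₀⟩ := h1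
  have htrace : (R * R).trace = ∑ i, hR.eigenvalues i ^ 2 := by
    simpa using hR.trace_mul_self_eq_sum_sq_eigenvalues
  simpa [htrace] using sum_abs_le_of_apply_eq_one_of_le_card_zeros hi₀ h0
end

section
/- Let R be a real symmetric n×n matrix having both 1 and −1 as eigenvalues, and having 0 as an eigenvalue with multiplicity at least m. Then Σ|λ_i| ≤ √((n−2−m)(tr(R²)−2)) + 2. -/
/-!
Split off the eigenvalues `1` and `-1`. The remaining nonzero eigenvalues are indexed by a set `T`
of size at most `n - 2 - m`, and since `tr (R²) = ∑ λᵢ²`, their squares sum to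
`tr (R²) - 2`.
Cauchy–Schwarz on `T` bounds `∑_{i ∈ T} |λᵢ|` by `√(#T · ∑_{i ∈ T} λᵢ²)`.
-/

open scoped Classical

open Finset

theorem Matrix.IsHermitian.trace_mul_self_eq_sum_eigenvalues_sq {𝕜 n : Type*} [RCLike 𝕜]
    [Fintype n] [DecidableEq n] {A : Matrix n n 𝕜} (hA : A.IsHermitian) :
    (A * A).trace = ∑ i, (hA.eigenvalues i : 𝕜) ^ 2 := by
  conv_lhs => rw [hA.spectral_theorem, ← map_mul, Unitary.conjStarAlgAut_apply, trace_mul_cycle,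
    Unitary.coe_star_mul_self, one_mul, diagonal_mul_diagonal, trace_diagonal]
  simp [sq]

variable {ι : Type*} [Fintype ι] [DecidableEq ι]

theorem Finset.sum_comp_eq_sum_support_sdiff_pair_add {M : Type*} [AddCommMonoid M]
    (f : ι → ℝ) (g : ℝ → M) (hg : g 0 = 0) {i j : ι} (hij : i ≠ j) (hi : f i ≠ 0)
    (hj : f j ≠ 0) :
    ∑ k, g (f k) =
      ∑ k ∈ ({k | f k ≠ 0} : Finset ι) \ {i, j}, g (f k) + (g (f i) + g (f j)) := by
  have hsub : {i, j} ⊆ ({k | f k ≠ 0} : Finset ι) := by simp [insert_subset_iff, hi, hj]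
  rw [← sum_pair hij (f := fun k => g (f k)), sum_sdiff hsub, sum_filter_of_ne]
  intro k _ hk hfk
  exact hk (by rw [hfk, hg])

theorem Finset.card_support_sdiff_pair_add_card_zeros {f : ι → ℝ} {i j : ι} (hij : i ≠ j)
    (hi : f i ≠ 0) (hj : f j ≠ 0) :
    #(({k | f k ≠ 0} : Finset ι) \ {i, j}) + 2 + #{k | f k = 0} = Fintype.card ι := by
  have hsub : {i, j} ⊆ ({k | f k ≠ 0} : Finset ι) := by simp [insert_subset_iff, hi, hj]
  have hcard := card_le_card hsub
  rw [card_pair hij] at hcard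
  rw [card_sdiff_of_subset hsub, card_pair hij, Nat.sub_add_cancel hcard, ← card_univ, add_comm]
  exact card_filter_add_card_filter_not (s := univ) (fun k => f k = 0)

theorem sum_abs_le_sqrt_mul_sum_sq_sub_two_add_two {f : ι → ℝ} {i j : ι} (hij : i ≠ j)
    (hi : |f i| = 1) (hj : |f j| = 1) {m : ℕ} (hm : m ≤ #{k | f k = 0}) :
    ∑ k, |f k| ≤ √((Fintype.card ι - 2 - m) * (∑ k, f k ^ 2 - 2)) + 2 := by
  have hi₀ : f i ≠ 0 := by simp [← abs_ne_zero, hi]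
  have hj₀ : f j ≠ 0 := by simp [← abs_ne_zero, hj]
  set T := ({k | f k ≠ 0} : Finset ι) \ {i, j}
  have hsum_abs : ∑ k, |f k| = ∑ k ∈ T, |f k| + 2 := by
    rw [sum_comp_eq_sum_support_sdiff_pair_add f (|·|) abs_zero hij hi₀ hj₀, hi, hj,
      one_add_one_eq_two]
  have hsum_sq : ∑ k, f k ^ 2 - 2 = ∑ k ∈ T, f k ^ 2 := by
    rw [sum_comp_eq_sum_support_sdiff_pair_add f (· ^ 2) (zero_pow two_ne_zero) hij hi₀ hj₀,
      ← sq_abs (f i), ← sq_abs (f j), hi, hj, one_pow, one_add_one_eq_two, add_sub_cancel_right]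
  have hcard : (#T : ℝ) ≤ Fintype.card ι - 2 - m := by
    have hpart : #T + 2 + #{k | f k = 0} = Fintype.card ι :=
      card_support_sdiff_pair_add_card_zeros hij hi₀ hj₀
    rw [le_sub_iff_add_le, le_sub_iff_add_le]
    exact_mod_cast (by omega : #T + m + 2 ≤ Fintype.card ι)
  calc ∑ k, |f k| = ∑ k ∈ T, |f k| + 2 := hsum_abs
    _ ≤ √(#T * ∑ k ∈ T, f k ^ 2) + 2 := by grw [sum_abs_le_sqrt_card_mul_sum_sq T f]
    _ ≤ √((Fintype.card ι - 2 - m) * (∑ k, f k ^ 2 - 2)) + 2 := by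
      rw [hsum_sq]; gcongr

theorem energy_bound_bipartite_eigenvalues_and_nullity {n : ℕ}
    (R : Matrix (Fin n) (Fin n) ℝ) (hR : R.IsHermitian) (m : ℕ)
    (h1 : ∃ i, hR.eigenvalues i = 1)
    (hneg1 : ∃ i, hR.eigenvalues i = -1)
    (h0 : m ≤ (Finset.univ.filter fun i => hR.eigenvalues i = 0).card) :
    ∑ i, |hR.eigenvalues i| ≤
      Real.sqrt (((n : ℝ) - 2 - m) * ((R * R).trace - 2)) + 2 := by
  obtain ⟨i, hi⟩ := h1
  obtain ⟨j, hj⟩ := hneg1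
  have hij : i ≠ j := fun h => by norm_num [h, hj] at hi
  have hbound := sum_abs_le_sqrt_mul_sum_sq_sub_two_add_two hij (by simp [hi]) (by simp [hj]) h0
  simpa [hR.trace_mul_self_eq_sum_eigenvalues_sq] using hbound
end

section
/- Let G be a connected graph on n ≥ 3 vertices with Randić matrix R, and suppose R_{−1}(G) ≤ 15(n+1)/56 and 1 is an eigenvalue of R. Then the Randić energy satisfies RE(G) ≤ √((n−1−η)·(15n−13)/28) + 1, where η is the nullity of R. -/
open scoped Classical

noncomputable def randicMatrix {V : Type*} [Fintype V] (G : SimpleGraph V)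
    [DecidableRel G.Adj] : Matrix V V ℝ :=
  fun u v =>
    if G.Adj u v then 1 / Real.sqrt ((G.degree u : ℝ) * (G.degree v : ℝ)) else 0

noncomputable def randicIndex {V : Type*} [Fintype V] (G : SimpleGraph V)
    [DecidableRel G.Adj] : ℝ :=
  (1 / 2) * ∑ u, ∑ v, if G.Adj u v then 1 / ((G.degree u : ℝ) * (G.degree v : ℝ)) else 0

/-!
The squares of the eigenvalues of `R` sum to `tr R² = 2 R₋₁(G) ≤ 15(n+1)/28`. Removing the
eigenvalue `1` leaves squares summing to at most `(15n-13)/28`, carried by the `n-1-η` remaining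
nonzero eigenvalues, so Cauchy–Schwarz bounds their absolute sum by `√((n-1-η)(15n-13)/28)`.
-/

open Finset

theorem Matrix.IsHermitian.trace_mul_self {𝕜 m : Type*} [RCLike 𝕜] [Fintype m] [DecidableEq m]
    {A : Matrix m m 𝕜} (hA : A.IsHermitian) :
    (A * A).trace = ∑ i, (hA.eigenvalues i : 𝕜) ^ 2 := by
  conv_lhs => rw [hA.spectral_theorem, ← map_mul, Unitary.conjStarAlgAut_apply,
    Matrix.trace_mul_cycle, Unitary.coe_star_mul_self, Matrix.one_mul,
    Matrix.diagonal_mul_diagonal, Matrix.trace_diagonal]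
  simp [sq]

theorem Finset.sum_abs_le_sqrt_card_filter_ne_zero_mul_sum_sq {ι : Type*} (s : Finset ι)
    (f : ι → ℝ) : ∑ i ∈ s, |f i| ≤ √(#{i ∈ s | f i ≠ 0} * ∑ i ∈ s, f i ^ 2) := by
  have hsupp : ∀ g : ℝ → ℝ, g 0 = 0 →
      ∑ i ∈ s with f i ≠ 0, g (f i) = ∑ i ∈ s, g (f i) := fun g hg =>
    sum_filter_of_ne fun i _ hi h => hi (by rw [h, hg])
  rw [← hsupp _ abs_zero, ← hsupp (· ^ 2) (zero_pow two_ne_zero)]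
  apply Real.le_sqrt_of_sq_le
  simpa only [sq_abs] using
    sq_sum_le_card_mul_sum_sq (s := {i ∈ s | f i ≠ 0}) (f := fun i => |f i|)

theorem Fintype.sum_abs_le_sqrt_mul_add_one_of_eq_one {ι : Type*} [Fintype ι] [DecidableEq ι]
    (f : ι → ℝ) {i₀ : ι} (hi₀ : f i₀ = 1) {B : ℝ} (hB : ∑ i, f i ^ 2 ≤ B + 1) :
    ∑ i, |f i| ≤ √((Fintype.card ι - 1 - #{i | f i = 0}) * B) + 1 := by
  have hcard : #{i ∈ univ.erase i₀ | f i ≠ 0} + 1 + #{i | f i = 0} = Fintype.card ι := by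
    rw [← card_univ, ← card_filter_add_card_filter_not (fun i => f i ≠ 0) (s := univ),
      filter_erase, card_erase_add_one (by simp [hi₀])]
    simp only [not_not]
  have hsq : ∑ i ∈ univ.erase i₀, f i ^ 2 ≤ B := by
    rw [← sum_erase_add _ _ (mem_univ i₀), hi₀] at hB; linarith
  calc ∑ i, |f i| = ∑ i ∈ univ.erase i₀, |f i| + 1 := by
        rw [← sum_erase_add _ _ (mem_univ i₀), hi₀, abs_one]
    _ ≤ √(#{i ∈ univ.erase i₀ | f i ≠ 0} * ∑ i ∈ univ.erase i₀, f i ^ 2) + 1 := by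
        gcongr; exact sum_abs_le_sqrt_card_filter_ne_zero_mul_sum_sq _ f
    _ ≤ √(#{i ∈ univ.erase i₀ | f i ≠ 0} * B) + 1 := by gcongr
    _ = √((Fintype.card ι - 1 - #{i | f i = 0}) * B) + 1 := by
        rw [← hcard]; push_cast; ring_nf

theorem trace_randicMatrix_mul_self {V : Type*} [Fintype V] (G : SimpleGraph V)
    [DecidableRel G.Adj] :
    (randicMatrix G * randicMatrix G).trace = 2 * randicIndex G := by
  have hentry : ∀ u v, randicMatrix G u v * randicMatrix G v u =
      if G.Adj u v then 1 / ((G.degree u : ℝ) * G.degree v) else 0 := by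
    intro u v
    by_cases h : G.Adj u v
    · simp only [randicMatrix, h, h.symm, if_true, mul_comm (G.degree v : ℝ), one_div,
        ← mul_inv, Real.mul_self_sqrt (by positivity : (0 : ℝ) ≤ G.degree u * G.degree v)]
    · simp [randicMatrix, h, G.adj_comm]
  simp only [Matrix.trace, Matrix.diag, Matrix.mul_apply, hentry, randicIndex]
  ring

theorem randic_energy_bound_connected_general {V : Type*} [Fintype V]
    (G : SimpleGraph V) [DecidableRel G.Adj] (n : ℕ)
    (hn : Fintype.card V = n)
    (hR : (randicMatrix G).IsHermitian)
    (hRI : randicIndex G ≤ 15 * ((n : ℝ) + 1) / 56)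
    (h1 : ∃ i, hR.eigenvalues i = 1) (η : ℕ)
    (hη : η = (Finset.univ.filter fun i => hR.eigenvalues i = 0).card) :
    ∑ i, |hR.eigenvalues i| ≤
      Real.sqrt (((n : ℝ) - 1 - η) * (15 * (n : ℝ) - 13) / 28) + 1 := by
  obtain ⟨i₀, hi₀⟩ := h1
  have hsq : ∑ i, hR.eigenvalues i ^ 2 ≤ (15 * (n : ℝ) - 13) / 28 + 1 := by
    have := hR.trace_mul_self
    simp only [RCLike.ofReal_real_eq_id, id] at this
    linarith [trace_randicMatrix_mul_self G]
  simpa only [hn, hη, mul_div_assoc] using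
    Fintype.sum_abs_le_sqrt_mul_add_one_of_eq_one _ hi₀ hsq

theorem randic_energy_bound_connected {V : Type*} [Fintype V]
    (G : SimpleGraph V) [DecidableRel G.Adj] (n : ℕ)
    (hn : Fintype.card V = n) (hn3 : 3 ≤ n) (hconn : G.Connected)
    (hR : (randicMatrix G).IsHermitian)
    (hRI : randicIndex G ≤ 15 * ((n : ℝ) + 1) / 56)
    (h1 : ∃ i, hR.eigenvalues i = 1) (η : ℕ)
    (hη : η = (Finset.univ.filter fun i => hR.eigenvalues i = 0).card) :
    ∑ i, |hR.eigenvalues i| ≤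
      Real.sqrt (((n : ℝ) - 1 - η) * (15 * (n : ℝ) - 13) / 28) + 1 :=
  randic_energy_bound_connected_general G n hn hR hRI h1 η hη
end

section
/- Let G be a graph on n vertices whose Randić matrix R has 1 as an eigenvalue and nullity η, and suppose R_{−1}(G) ≤ 15(n+1)/56. If η ≥ (n² + 56n − 141 − 28(n−3)√2)/(15n − 13), then RE(G) ≤ (n−3)·(√2)/2 + 2. -/
open scoped Classical

/-! The eigenvalue `1` contributes `1` to the energy and the `η` zero eigenvalues nothing. The
squares of the remaining `n - η - 1` eigenvalues sum to `tr(R²) - 1 = 2R₋₁(G) - 1 ≤ (15n - 13)/28`,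
so by Cauchy–Schwarz they contribute at most `√((n - η - 1)(15n - 13)/28)`, and the lower bound on
`η` is exactly what makes this at most `(n - 3)√2/2 + 1`. -/

open Finset

namespace Matrix.IsHermitian

variable {n 𝕜 : Type*} [Fintype n] [DecidableEq n] [RCLike 𝕜] {A : Matrix n n 𝕜}

theorem trace_mul_self_eq_sum_sq_eigenvalues_s10 (hA : A.IsHermitian) :
    (A * A).trace = ∑ i, ((hA.eigenvalues i ^ 2 : ℝ) : 𝕜) := by
  conv_lhs => rw [hA.spectral_theorem, ← map_mul, Unitary.conjStarAlgAut_apply, trace_mul_cycle,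
    Unitary.coe_star_mul_self, one_mul, diagonal_mul_diagonal, trace_diagonal]
  simp [sq]

end Matrix.IsHermitian

theorem sum_abs_le_abs_add_sqrt {ι : Type*} [Fintype ι] (f : ι → ℝ) {i₀ : ι} (hi₀ : f i₀ ≠ 0) :
    ∑ i, |f i| ≤
      |f i₀| + √((Fintype.card ι - #{i | f i = 0} - 1 : ℝ) * (∑ i, f i ^ 2 - f i₀ ^ 2)) := by
  set S := ({i | f i ≠ 0} : Finset ι).erase i₀
  have hi₀S : i₀ ∈ ({i | f i ≠ 0} : Finset ι) := by simpa using hi₀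
  have hsplit : ∀ g : ℝ → ℝ, g 0 = 0 → ∑ i, g (f i) = g (f i₀) + ∑ i ∈ S, g (f i) := by
    intro g hg
    rw [← sum_filter_of_ne (p := fun i => f i ≠ 0) fun i _ hi h => hi (by simp [h, hg])]
    exact (add_sum_erase _ _ hi₀S).symm
  have hS : (#S : ℝ) = Fintype.card ι - #{i | f i = 0} - 1 := by
    rw [card_erase_of_mem hi₀S, Nat.cast_sub (card_pos.2 ⟨_, hi₀S⟩),
      ← card_univ, ← card_filter_add_card_filter_not (s := univ) (fun i => f i = 0)]
    simp
  rw [hsplit (|·|) abs_zero, hsplit (· ^ 2) (zero_pow two_ne_zero), add_sub_cancel_left, ← hS]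
  exact add_le_add_right (S.sum_abs_le_sqrt_card_mul_sum_sq f) _

theorem sqrt_mul_le_of_nullity_ge {n η : ℝ} (hn : 3 ≤ n)
    (hnull : (n ^ 2 + 56 * n - 141 - 28 * (n - 3) * √2) / (15 * n - 13) ≤ η) :
    √((n - η - 1) * ((15 * n - 13) / 28)) ≤ (n - 3) * √2 / 2 + 1 := by
  have hs : √2 ^ 2 = 2 := Real.sq_sqrt zero_le_two
  rw [div_le_iff₀ (by linarith)] at hnull
  exact Real.sqrt_le_iff.2 ⟨by positivity, by nlinarith⟩

theorem randic_energy_bound_large_nullity {V : Type*} [Fintype V]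
    (G : SimpleGraph V) [DecidableRel G.Adj] (n : ℕ)
    (hn : Fintype.card V = n) (hn3 : 3 ≤ n)
    (hR : (randicMatrix G).IsHermitian)
    (h1 : ∃ i, hR.eigenvalues i = 1)
    (hRI : randicIndex G ≤ 15 * ((n : ℝ) + 1) / 56) (η : ℕ)
    (hη : η = (Finset.univ.filter fun i => hR.eigenvalues i = 0).card)
    (hnull : ((n : ℝ) ^ 2 + 56 * n - 141 - 28 * ((n : ℝ) - 3) * Real.sqrt 2) /
        (15 * (n : ℝ) - 13) ≤ η) :
    ∑ i, |hR.eigenvalues i| ≤ ((n : ℝ) - 3) * Real.sqrt 2 / 2 + 2 := by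
  obtain ⟨i₀, hi₀⟩ := h1
  have hsq : ∑ i, hR.eigenvalues i ^ 2 = 2 * randicIndex G := by
    exact_mod_cast hR.trace_mul_self_eq_sum_sq_eigenvalues_s10.symm.trans
      (trace_randicMatrix_mul_self G)
  have hη_lt : η < n := hη ▸ hn ▸ card_lt_univ_of_notMem (x := i₀) (by simp [hi₀])
  calc ∑ i, |hR.eigenvalues i|
      ≤ 1 + √((n - η - 1 : ℝ) * (∑ i, hR.eigenvalues i ^ 2 - 1)) := by
        simpa [hi₀, hn, hη] using sum_abs_le_abs_add_sqrt hR.eigenvalues (i₀ := i₀) (by simp [hi₀])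
    _ ≤ 1 + √((n - η - 1 : ℝ) * ((15 * n - 13) / 28)) := by
        gcongr
        · linarith [show (η : ℝ) + 1 ≤ n by exact_mod_cast hη_lt]
        · linarith
    _ ≤ 1 + ((n - 3) * √2 / 2 + 1) := by
        gcongr
        exact sqrt_mul_le_of_nullity_ge (by exact_mod_cast hn3) hnull
    _ = (n - 3) * √2 / 2 + 2 := by ring
end

section
/- Let G be a connected graph on n ≥ 3 vertices whose Randić matrix R has 1 as an eigenvalue, nullity η ≥ 1, and satisfies R_{−1}(G) ≤ n/4. Then RE(G) ≤ √(n−1−η)·√(n−2)·(√2)/2 + 1 < (n−3)·(√2)/2 + 2. -/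
/-!
Since `R` is symmetric, `∑ λᵢ² = tr R² = 2 R₋₁(G) ≤ n / 2`. Discarding the eigenvalue `1` and the
`η` zero eigenvalues leaves `n - 1 - η` eigenvalues whose squares sum to at most `(n - 2) / 2`, and
Cauchy–Schwarz bounds the sum of their absolute values by `√(n - 1 - η) · √((n - 2) / 2)`.
The strict inequality is then `√(n - 1 - η) ≤ √(n - 2)` together with `√2 / 2 < 1`.
-/

open scoped Classical

open Finset

theorem Matrix.IsHermitian.trace_sq {𝕜 n : Type*} [RCLike 𝕜] [Fintype n] [DecidableEq n]
    {A : Matrix n n 𝕜} (hA : A.IsHermitian) :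
    (A ^ 2).trace = ∑ i, (hA.eigenvalues i : 𝕜) ^ 2 := by
  conv_lhs => rw [hA.spectral_theorem, ← map_pow, Unitary.conjStarAlgAut_apply,
    Matrix.trace_mul_cycle, Unitary.star_mul_self_of_mem (SetLike.coe_mem _), one_mul]
  simp [Matrix.diagonal_pow]

theorem trace_randicMatrix_sq {V : Type*} [Fintype V] (G : SimpleGraph V) [DecidableRel G.Adj] :
    (randicMatrix G ^ 2).trace = 2 * randicIndex G := by
  have entry_mul_entry (u v : V) : randicMatrix G u v * randicMatrix G v u =
      if G.Adj u v then 1 / ((G.degree u : ℝ) * G.degree v) else 0 := by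
    by_cases h : G.Adj u v
    · rw [randicMatrix, randicMatrix, if_pos h, if_pos h.symm, if_pos h, mul_comm (G.degree v : ℝ),
        div_mul_div_comm, one_mul, Real.mul_self_sqrt (by positivity)]
    · simp [randicMatrix, h]
  simp only [sq, Matrix.trace, Matrix.diag_apply, Matrix.mul_apply, entry_mul_entry, randicIndex]
  ring

theorem Finset.sum_abs_le_sqrt_card_mul_sqrt_sum_sq {ι : Type*} (s : Finset ι) (f : ι → ℝ) :
    ∑ i ∈ s, |f i| ≤ √(#s : ℝ) * √(∑ i ∈ s, f i ^ 2) := by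
  rw [← Real.sqrt_mul (Nat.cast_nonneg _)]
  refine Real.le_sqrt_of_sq_le ?_
  simpa only [sq_abs] using sq_sum_le_card_mul_sum_sq (s := s) (f := fun i => |f i|)

theorem sum_abs_le_of_apply_eq_one {ι : Type*} [Fintype ι] (f : ι → ℝ) {i₀ : ι} (hi₀ : f i₀ = 1) :
    ∑ i, |f i| ≤ √((#{i | f i ≠ 0} : ℝ) - 1) * √(∑ i, f i ^ 2 - 1) + 1 := by
  set s : Finset ι := {i | f i ≠ 0}
  have hi₀s : i₀ ∈ s := by simp [s, hi₀]
  have sum_eq : ∀ g : ℝ → ℝ, g 0 = 0 → ∑ i, g (f i) = g 1 + ∑ i ∈ s.erase i₀, g (f i) := by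
    intro g hg
    rw [← hi₀, add_sum_erase s (fun i => g (f i)) hi₀s, sum_filter_of_ne]
    rintro i - hgi hfi
    exact hgi (by rw [hfi, hg])
  rw [sum_eq _ abs_zero, sum_eq (· ^ 2) (zero_pow two_ne_zero), ← cast_card_erase_of_mem hi₀s,
    abs_one, one_pow, add_sub_cancel_left, add_comm]
  grw [sum_abs_le_sqrt_card_mul_sqrt_sum_sq]

theorem sqrt_mul_sqrt_mul_sqrt_two_div_two_add_one_lt {x y : ℝ} (hx : 0 ≤ x) (hxy : x ≤ y) :
    √x * √y * √2 / 2 + 1 < (y - 1) * √2 / 2 + 2 := by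
  have sqrt_mul_sqrt_le : √x * √y ≤ y := by
    calc √x * √y ≤ √y * √y := by gcongr
      _ = y := Real.mul_self_sqrt (hx.trans hxy)
  have hsqrt2 : √2 < 2 := by
    rw [Real.sqrt_lt' two_pos]; norm_num
  nlinarith [Real.sqrt_nonneg 2]

theorem randic_energy_bound_no_suspended_paths_general {V : Type*} [Fintype V]
    (G : SimpleGraph V) [DecidableRel G.Adj] (n : ℕ)
    (hn : Fintype.card V = n)
    (hR : (randicMatrix G).IsHermitian)
    (h1 : ∃ i, hR.eigenvalues i = 1) (η : ℕ)
    (hη : η = (Finset.univ.filter fun i => hR.eigenvalues i = 0).card)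
    (hη1 : 1 ≤ η)
    (hRI : randicIndex G ≤ (n : ℝ) / 4) :
    ∑ i, |hR.eigenvalues i| ≤
      Real.sqrt ((n : ℝ) - 1 - η) * Real.sqrt ((n : ℝ) - 2) * Real.sqrt 2 / 2 + 1 ∧
    Real.sqrt ((n : ℝ) - 1 - η) * Real.sqrt ((n : ℝ) - 2) * Real.sqrt 2 / 2 + 1 <
      ((n : ℝ) - 3) * Real.sqrt 2 / 2 + 2 := by
  obtain ⟨i₀, hi₀⟩ := h1
  have sum_sq_le : ∑ i, hR.eigenvalues i ^ 2 ≤ (n - 2) / 2 + 1 := by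
    have := hR.trace_sq
    rw [trace_randicMatrix_sq] at this
    simp only [RCLike.ofReal_real_eq_id, id] at this
    linarith
  have card_ne_zero : (#{i | hR.eigenvalues i ≠ 0} : ℝ) = n - η := by
    have h := card_filter_add_card_filter_not (s := univ) (fun i => hR.eigenvalues i = 0)
    rw [card_univ, hn, ← hη] at h
    rw [← h]
    push_cast
    ring
  have one_le_card : (1 : ℝ) ≤ #{i | hR.eigenvalues i ≠ 0} :=
    Nat.one_le_cast.mpr (card_pos.mpr ⟨i₀, by simp [hi₀]⟩)
  have sqrt_half : √(((n : ℝ) - 2) / 2) = √((n : ℝ) - 2) * √2 / 2 := by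
    rw [Real.sqrt_div' _ zero_le_two]
    field_simp
    rw [Real.sq_sqrt zero_le_two, mul_comm]
  constructor
  · calc ∑ i, |hR.eigenvalues i|
        ≤ √((#{i | hR.eigenvalues i ≠ 0} : ℝ) - 1) * √(∑ i, hR.eigenvalues i ^ 2 - 1) + 1 :=
          sum_abs_le_of_apply_eq_one _ hi₀
      _ ≤ √((n : ℝ) - 1 - η) * √(((n : ℝ) - 2) / 2) + 1 := by
          rw [card_ne_zero, sub_right_comm]
          gcongr
          linarith
      _ = _ := by rw [sqrt_half]; ring
  · have hη1' : (1 : ℝ) ≤ η := by exact_mod_cast hη1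
    convert sqrt_mul_sqrt_mul_sqrt_two_div_two_add_one_lt (x := n - 1 - η) (y := n - 2)
      (by linarith) (by linarith) using 3
    ring

theorem randic_energy_bound_no_suspended_paths {V : Type*} [Fintype V]
    (G : SimpleGraph V) [DecidableRel G.Adj] (n : ℕ)
    (hn : Fintype.card V = n) (hn3 : 3 ≤ n) (hconn : G.Connected)
    (hR : (randicMatrix G).IsHermitian)
    (h1 : ∃ i, hR.eigenvalues i = 1) (η : ℕ)
    (hη : η = (Finset.univ.filter fun i => hR.eigenvalues i = 0).card)
    (hη1 : 1 ≤ η)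
    (hRI : randicIndex G ≤ (n : ℝ) / 4) :
    ∑ i, |hR.eigenvalues i| ≤
      Real.sqrt ((n : ℝ) - 1 - η) * Real.sqrt ((n : ℝ) - 2) * Real.sqrt 2 / 2 + 1 ∧
    Real.sqrt ((n : ℝ) - 1 - η) * Real.sqrt ((n : ℝ) - 2) * Real.sqrt 2 / 2 + 1 <
      ((n : ℝ) - 3) * Real.sqrt 2 / 2 + 2 :=
  randic_energy_bound_no_suspended_paths_general G n hn hR h1 η hη hη1 hRI
end

section
/- Let G be a connected TB graph on n ≥ 3 vertices (bipartite with parts A, B, every vertex of B of degree 1 or 2) with Randić matrix R. Then tr(R²) restricted to the A-block satisfies Σ_{a∈A} (R²)_{a,a} ≤ (n+1)/4, and hence tr(R²) ≤ (n+1)/2. -/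
open scoped Classical

/-!
If a vertex `u` of degree `d` has `k` pendant neighbours (neighbours of degree one), then
`(R²)_{uu} = d⁻¹ ∑_{v ∼ u} 1 / d_v ≤ (d + k) / (2d) = 1/2 + k / (2d)`, since every other
neighbour has degree at least two. In a connected graph on at least three vertices a vertex with
a pendant neighbour has degree at least two, so `(R²)_{uu} ≤ 1/2 + k/4`.

Summing over `A`: the pendant neighbours of distinct vertices of `A` are distinct degree-one
vertices of `B`, so `∑_{a ∈ A} (R²)_{aa} ≤ |A|/2 + |B₁|/4`, where `B₁` and `B₂` are the vertices
of `B` of degree one and two. A spanning tree gives `n - 1 ≤ |E| = ∑_{b ∈ B} d_b = |B₁| + 2|B₂|`,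
i.e. `2|A| + |B₁| ≤ n + 1`. Finally, the two diagonal blocks of `R²` of a bipartite graph have
the same trace.
-/

open Finset

namespace SimpleGraph

variable {V : Type*} [Fintype V] (G : SimpleGraph V) [DecidableRel G.Adj]

def pendantNeighbors (u : V) : Finset V := {v ∈ G.neighborFinset u | G.degree v = 1}

variable {G}

lemma sum_inv_degree_neighborFinset_le (u : V) :
    ∑ v ∈ G.neighborFinset u, (G.degree v : ℝ)⁻¹ ≤
      ((G.degree u : ℝ) + #(G.pendantNeighbors u)) / 2 := by
  have hterm : ∀ v ∈ G.neighborFinset u,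
      (G.degree v : ℝ)⁻¹ ≤ 1 / 2 + if G.degree v = 1 then 1 / 2 else 0 := by
    intro v hv
    have hpos : 0 < G.degree v :=
      G.degree_pos_iff_exists_adj v |>.2 ⟨u, ((G.mem_neighborFinset u v).1 hv).symm⟩
    split_ifs with h1
    · norm_num [h1]
    · have h2 : (2 : ℝ) ≤ G.degree v := by exact_mod_cast (by omega : 2 ≤ G.degree v)
      rw [add_zero, inv_le_comm₀ (by linarith) (by norm_num)]
      linarith
  calc ∑ v ∈ G.neighborFinset u, (G.degree v : ℝ)⁻¹
      ≤ ∑ v ∈ G.neighborFinset u, (1 / 2 + if G.degree v = 1 then 1 / 2 else 0) :=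
        sum_le_sum hterm
    _ = ((G.degree u : ℝ) + #(G.pendantNeighbors u)) / 2 := by
        rw [sum_add_distrib, ← sum_filter, pendantNeighbors, ← card_neighborFinset_eq_degree]
        simp only [sum_const, nsmul_eq_mul]
        ring

lemma Connected.two_le_degree_of_adj_of_degree_eq_one (hconn : G.Connected)
    (hcard : 3 ≤ Fintype.card V) {u v : V} (huv : G.Adj u v) (hv : G.degree v = 1) :
    2 ≤ G.degree u := by
  by_contra! hlt
  have hu : G.degree u = 1 := by
    have := G.degree_pos_iff_exists_adj u |>.2 ⟨v, huv⟩
    omega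
  obtain ⟨w, -, hw⟩ : ∃ w ∈ (univ : Finset V), w ∉ ({u, v} : Finset V) :=
    exists_mem_notMem_of_card_lt_card <| card_le_two.trans_lt (by rw [card_univ]; omega)
  have unique_adj {x y z : V} (hx : G.degree x = 1) (hy : G.Adj x y) (hz : G.Adj x z) : y = z :=
    (degree_eq_one_iff_existsUnique_adj.1 hx).unique hy hz
  -- `{u, v}` is closed under adjacency, so no walk leaves it.
  obtain ⟨d, -, hd, hd'⟩ :=
    (hconn u w).some.exists_boundary_dart {u, v} (by simp) (by simpa using hw)
  simp only [Set.mem_insert_iff, Set.mem_singleton_iff, not_or] at hd hd'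
  rcases hd with hx | hx
  · exact hd'.2 (unique_adj hu (hx ▸ d.adj) huv)
  · exact hd'.1 (unique_adj hv (hx ▸ d.adj) huv.symm)

lemma IsBipartiteWith.sum_card_pendantNeighbors_le {s t : Finset V}
    (h : G.IsBipartiteWith s t) :
    ∑ u ∈ s, #(G.pendantNeighbors u) ≤ #{v ∈ t | G.degree v = 1} := by
  have hdisj : (s : Set V).PairwiseDisjoint G.pendantNeighbors := by
    intro x _ y _ hxy
    refine Finset.disjoint_left.2 fun v hvx hvy => hxy ?_
    simp only [pendantNeighbors, mem_filter, mem_neighborFinset] at hvx hvy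
    exact (degree_eq_one_iff_existsUnique_adj.1 hvx.2).unique hvx.1.symm hvy.1.symm
  rw [← card_biUnion hdisj]
  refine card_le_card (biUnion_subset.2 fun u hu v hv => ?_)
  simp only [pendantNeighbors, mem_filter, mem_neighborFinset] at hv ⊢
  exact ⟨h.mem_of_mem_adj hu hv.1, hv.2⟩

lemma sum_degree_add_card_filter_degree_eq_one (t : Finset V)
    (h : ∀ v ∈ t, G.degree v = 1 ∨ G.degree v = 2) :
    ∑ v ∈ t, G.degree v + #{v ∈ t | G.degree v = 1} = 2 * #t := by
  rw [card_filter, ← sum_add_distrib, mul_comm, ← smul_eq_mul, ← sum_const]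
  refine sum_congr rfl fun v hv => ?_
  rcases h v hv with h1 | h2 <;> simp [*]

lemma Connected.two_mul_card_add_sum_card_pendantNeighbors_le [DecidableEq V]
    (hconn : G.Connected) {s : Finset V} (hbip : G.IsBipartiteWith s ↑sᶜ)
    (hdeg : ∀ v ∈ sᶜ, G.degree v = 1 ∨ G.degree v = 2) :
    2 * #s + ∑ u ∈ s, #(G.pendantNeighbors u) ≤ Fintype.card V + 1 := by
  have hedges : Fintype.card V ≤ #G.edgeFinset + 1 := by
    simpa [Nat.card_eq_fintype_card, edgeFinset_card] using
      hconn.card_vert_le_card_edgeSet_add_one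
  have hdegsum := sum_degree_add_card_filter_degree_eq_one sᶜ hdeg
  rw [isBipartiteWith_sum_degrees_eq_card_edges' hbip] at hdegsum
  have hpend := hbip.sum_card_pendantNeighbors_le
  have hcard := card_add_card_compl s
  omega

end SimpleGraph

lemma Matrix.trace_mul_self_eq_two_mul_sum_inl {α A B : Type*} [CommSemiring α]
    [Fintype A] [Fintype B] (M : Matrix (A ⊕ B) (A ⊕ B) α)
    (hA : ∀ a a', M (.inl a) (.inl a') = 0) (hB : ∀ b b', M (.inr b) (.inr b') = 0) :
    (M * M).trace = 2 * ∑ a, (M * M) (.inl a) (.inl a) := by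
  simp only [Matrix.trace, Matrix.diag, Matrix.mul_apply, Fintype.sum_sum_type, hA, hB,
    mul_zero, sum_const_zero, zero_add, add_zero]
  rw [sum_comm (f := fun b a => M (.inr b) (.inl a) * M (.inl a) (.inr b)), two_mul]
  simp only [mul_comm]

section Randic

open SimpleGraph

variable {V : Type*} [Fintype V] {G : SimpleGraph V} [DecidableRel G.Adj]

lemma randicMatrix_apply_of_not_adj {u v : V} (h : ¬ G.Adj u v) : randicMatrix G u v = 0 :=
  if_neg h

lemma randicMatrix_mul_self_apply_self (u : V) :
    (randicMatrix G * randicMatrix G) u u =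
      (G.degree u : ℝ)⁻¹ * ∑ v ∈ G.neighborFinset u, (G.degree v : ℝ)⁻¹ := by
  rw [Matrix.mul_apply, mul_sum, ← sum_subset (subset_univ _)]
  · refine sum_congr rfl fun v hv => ?_
    have huv : G.Adj u v := (G.mem_neighborFinset u v).1 hv
    simp only [randicMatrix, if_pos huv, if_pos huv.symm, mul_comm (G.degree v : ℝ)]
    rw [one_div_mul_one_div, Real.mul_self_sqrt (by positivity), one_div, mul_inv]
  · intro v _ hv
    have huv : ¬ G.Adj u v := fun h => hv ((G.mem_neighborFinset u v).2 h)
    rw [randicMatrix_apply_of_not_adj huv, zero_mul]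

lemma randicMatrix_mul_self_apply_self_le (u : V)
    (h : (G.pendantNeighbors u).Nonempty → 2 ≤ G.degree u) :
    (randicMatrix G * randicMatrix G) u u ≤ 1 / 2 + #(G.pendantNeighbors u) / 4 := by
  rw [randicMatrix_mul_self_apply_self]
  set d := G.degree u
  set k := #(G.pendantNeighbors u)
  rcases Nat.eq_zero_or_pos d with hd | hd
  · rw [hd, Nat.cast_zero, inv_zero, zero_mul]
    positivity
  have hd' : (0 : ℝ) < d := by exact_mod_cast hd
  calc (d : ℝ)⁻¹ * ∑ v ∈ G.neighborFinset u, (G.degree v : ℝ)⁻¹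
      ≤ (d : ℝ)⁻¹ * ((d + k) / 2) := by
        gcongr
        exact sum_inv_degree_neighborFinset_le u
    _ = 1 / 2 + k / (2 * d) := by field_simp
    _ ≤ 1 / 2 + k / 4 := by
        rcases Nat.eq_zero_or_pos k with hk | hk
        · simp [hk]
        · have : (2 : ℝ) ≤ d := by exact_mod_cast h (card_pos.1 hk)
          gcongr
          linarith

lemma sum_randicMatrix_mul_self_apply_self_le [DecidableEq V] (hconn : G.Connected)
    (hcard : 3 ≤ Fintype.card V) {s : Finset V} (hbip : G.IsBipartiteWith s ↑sᶜ)
    (hdeg : ∀ v ∈ sᶜ, G.degree v = 1 ∨ G.degree v = 2) :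
    ∑ u ∈ s, (randicMatrix G * randicMatrix G) u u ≤ ((Fintype.card V : ℝ) + 1) / 4 := by
  have hcount : ((2 * #s + ∑ u ∈ s, #(G.pendantNeighbors u) : ℕ) : ℝ) ≤ Fintype.card V + 1 := by
    exact_mod_cast hconn.two_mul_card_add_sum_card_pendantNeighbors_le hbip hdeg
  calc ∑ u ∈ s, (randicMatrix G * randicMatrix G) u u
      ≤ ∑ u ∈ s, (1 / 2 + (#(G.pendantNeighbors u) : ℝ) / 4) := by
        refine sum_le_sum fun u _ => randicMatrix_mul_self_apply_self_le u fun ⟨v, hv⟩ => ?_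
        simp only [pendantNeighbors, mem_filter, mem_neighborFinset] at hv
        exact hconn.two_le_degree_of_adj_of_degree_eq_one hcard hv.1 hv.2
    _ = ((2 * #s + ∑ u ∈ s, #(G.pendantNeighbors u) : ℕ) : ℝ) / 4 := by
        push_cast
        rw [sum_add_distrib, sum_const, nsmul_eq_mul, ← sum_div]
        ring
    _ ≤ ((Fintype.card V : ℝ) + 1) / 4 := by gcongr

end Randic

theorem TB_trace_bound {A B : Type*} [Fintype A] [Fintype B]
    (G : SimpleGraph (A ⊕ B)) [DecidableRel G.Adj] (n : ℕ)
    (hn : Fintype.card (A ⊕ B) = n) (hn3 : 3 ≤ n)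
    (hconn : G.Connected)
    (hA : ∀ a a' : A, ¬ G.Adj (Sum.inl a) (Sum.inl a'))
    (hB : ∀ b b' : B, ¬ G.Adj (Sum.inr b) (Sum.inr b'))
    (hdegB : ∀ b : B, G.degree (Sum.inr b) = 1 ∨ G.degree (Sum.inr b) = 2) :
    (∑ a : A, (randicMatrix G * randicMatrix G) (Sum.inl a) (Sum.inl a)) ≤
        ((n : ℝ) + 1) / 4 ∧
      (randicMatrix G * randicMatrix G).trace ≤ ((n : ℝ) + 1) / 2 := by
  set s : Finset (A ⊕ B) := univ.map .inl
  have hbip : G.IsBipartiteWith s ↑sᶜ := by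
    refine ⟨coe_compl s ▸ disjoint_compl_right, ?_⟩
    rintro (a | b) (a' | b') hadj <;> simp_all [s]
  have hdeg : ∀ v ∈ sᶜ, G.degree v = 1 ∨ G.degree v = 2 := by
    rintro (a | b) hv
    · simp [s] at hv
    · exact hdegB b
  have hsum := sum_randicMatrix_mul_self_apply_self_le hconn (hn ▸ hn3) hbip hdeg
  rw [sum_map, hn] at hsum
  simp only [Function.Embedding.inl_apply] at hsum
  have htrace := (randicMatrix G).trace_mul_self_eq_two_mul_sum_inl
    (fun a a' => randicMatrix_apply_of_not_adj (hA a a'))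
    (fun b b' => randicMatrix_apply_of_not_adj (hB b b'))
  exact ⟨hsum, by rw [htrace]; linarith⟩
end
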